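/- arXiv:2307.03331 — 5 statements merged into one kernel-verified Lean document; each statement's English description precedes it below -/
import Mathlib

section
/- Let f : ℝⁿ → ℝ be differentiable with gradient ∇f that is M-Lipschitz on a convex set containing all relevant points. For iterates of the momentum method x_{k+1} = x_k + β(x_k − x_{k−1}) − α∇f(x_k + γ(x_k − x_{k−1})), the gradient satisfies ‖∇f(x_k)‖ ≤ (1/α)‖x_{k+1} − x_k‖ + (|β|/α + M|γ|)‖x_k − x_{k−1}‖. -/
theorem momentum_grad_bound {n : ℕ}
    (f : EuclideanSpace ℝ (Fin n) → ℝ) (hf : ContDiff ℝ 1 f)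
    (S : Set (EuclideanSpace ℝ (Fin n))) (hS : Convex ℝ S)
    (M α β γ : ℝ) (hM : 0 < M) (hα : 0 < α)
    (hLip : ∀ u ∈ S, ∀ v ∈ S, ‖gradient f u - gradient f v‖ ≤ M * ‖u - v‖)
    (xkm1 xk xkp1 : EuclideanSpace ℝ (Fin n))
    (hxk : xk ∈ S) (hyγ : xk + γ • (xk - xkm1) ∈ S)
    (hupdate : xkp1 = xk + β • (xk - xkm1) - α • gradient f (xk + γ • (xk - xkm1))) :
    ‖gradient f xk‖ ≤ (1 / α) * ‖xkp1 - xk‖ + (|β| / α + M * |γ|) * ‖xk - xkm1‖ := by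
  set y := xk + γ • (xk - xkm1) with hy
  have h1 : ‖gradient f xk - gradient f y‖ ≤ M * (|γ| * ‖xk - xkm1‖) := by
    have := hLip xk hxk y hyγ
    have hxy : xk - y = -(γ • (xk - xkm1)) := by rw [hy]; abel
    rw [hxy, norm_neg, norm_smul, Real.norm_eq_abs] at this
    linarith
  have h2 : α • gradient f y = (xk - xkp1) + β • (xk - xkm1) := by
    rw [hupdate]; abel
  have h3 : ‖gradient f y‖ ≤ (1 / α) * (‖xkp1 - xk‖ + |β| * ‖xk - xkm1‖) := by
    have hn : α * ‖gradient f y‖ = ‖(xk - xkp1) + β • (xk - xkm1)‖ := by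
      rw [← h2, norm_smul, Real.norm_eq_abs, abs_of_pos hα]
    have htri : ‖(xk - xkp1) + β • (xk - xkm1)‖ ≤ ‖xkp1 - xk‖ + |β| * ‖xk - xkm1‖ := by
      calc ‖(xk - xkp1) + β • (xk - xkm1)‖ ≤ ‖xk - xkp1‖ + ‖β • (xk - xkm1)‖ :=
            norm_add_le _ _
        _ = ‖xkp1 - xk‖ + |β| * ‖xk - xkm1‖ := by
            rw [norm_smul, Real.norm_eq_abs, ← norm_neg (xk - xkp1), neg_sub]
    rw [div_mul_eq_mul_div, le_div_iff₀ hα, mul_comm]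
    calc α * ‖gradient f y‖ = ‖(xk - xkp1) + β • (xk - xkm1)‖ := hn
      _ ≤ ‖xkp1 - xk‖ + |β| * ‖xk - xkm1‖ := htri
      _ = 1 * (‖xkp1 - xk‖ + |β| * ‖xk - xkm1‖) := by ring
  calc ‖gradient f xk‖ = ‖gradient f y + (gradient f xk - gradient f y)‖ := by
        congr 1; abel
    _ ≤ ‖gradient f y‖ + ‖gradient f xk - gradient f y‖ := norm_add_le _ _
    _ ≤ (1 / α) * (‖xkp1 - xk‖ + |β| * ‖xk - xkm1‖) + M * (|γ| * ‖xk - xkm1‖) := by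
        linarith
    _ = (1 / α) * ‖xkp1 - xk‖ + (|β| / α + M * |γ|) * ‖xk - xkm1‖ := by ring
end

section
/- Let f : ℝⁿ → ℝ be differentiable with M-Lipschitz gradient on a convex set S containing x, y, and the auxiliary points y^β = x + β(x − y'), y^γ = x + γ(x − y'). Then for the momentum step x⁺ = y^β − α∇f(y^γ), one has f(x⁺) − f(x) ≤ −(1/(2α) − M/2)‖y^β − x⁺‖² − (1/(2α) − |β−γ|M/2)‖x⁺ − x‖² + ((1/(2α) + M/2)β² + |β−γ|M/2)‖x − y'‖². -/
/-!
Write `p = y^β` and `q = y^γ`. The two-sided descent lemma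
`|f u - f v - ⟪∇f v, u - v⟫| ≤ M / 2 * ‖u - v‖²` bounds `f x⁺` from above and `f x` from below
around `p`, which leaves `⟪∇f p, x⁺ - x⟫`. Split `∇f p = ∇f q + (∇f p - ∇f q)`: since
`p - x⁺ = α ∇f q`, the three-point identity evaluates the first part exactly, and the second is at
most `M |β - γ| ‖x - y'‖ ‖x⁺ - x‖ ≤ |β - γ| M / 2 (‖x - y'‖² + ‖x⁺ - x‖²)`.
-/

open Set RealInnerProductSpace

section GradientStep

variable {E : Type*} [NormedAddCommGroup E] [InnerProductSpace ℝ E]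

theorem two_mul_inner_sub_sub_eq (a b c : E) :
    2 * ⟪a - b, b - c⟫ = ‖a - c‖ ^ 2 - ‖a - b‖ ^ 2 - ‖b - c‖ ^ 2 := by
  rw [← sub_add_sub_cancel a b c, norm_add_sq_real]
  ring

variable [CompleteSpace E] {f : E → ℝ}

theorem DifferentiableAt.hasDerivAt_comp_add_smul {v w : E} {t : ℝ}
    (hf : DifferentiableAt ℝ f (v + t • w)) :
    HasDerivAt (fun s : ℝ ↦ f (v + s • w)) ⟪gradient f (v + t • w), w⟫ t := by
  rw [inner_gradient_left]
  have hline : HasDerivAt (fun s : ℝ ↦ v + s • w) w t := by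
    simpa using ((hasDerivAt_id t).smul_const w).const_add v
  exact hf.hasFDerivAt.comp_hasDerivAt t hline

theorem abs_sub_sub_inner_gradient_le {S : Set E} (hS : Convex ℝ S)
    (hf : ∀ u ∈ S, DifferentiableAt ℝ f u) {M : ℝ}
    (hLip : ∀ u ∈ S, ∀ v ∈ S, ‖gradient f u - gradient f v‖ ≤ M * ‖u - v‖)
    {u v : E} (hu : u ∈ S) (hv : v ∈ S) :
    |f u - f v - ⟪gradient f v, u - v⟫| ≤ M / 2 * ‖u - v‖ ^ 2 := by
  set K := ‖u - v‖
  have hseg : ∀ t ∈ Icc (0 : ℝ) 1, v + t • (u - v) ∈ S := fun t ht ↦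
    hS.add_smul_sub_mem hv hu ht
  -- The first-order remainder along the segment has derivative at most `M K² t`, so it stays
  -- below `M K² t² / 2`.
  have hφ : ∀ t ∈ Icc (0 : ℝ) 1, HasDerivAt
      (fun s ↦ f (v + s • (u - v)) - f v - s * ⟪gradient f v, u - v⟫)
      ⟪gradient f (v + t • (u - v)) - gradient f v, u - v⟫ t := fun t ht ↦
    ((((hf _ (hseg t ht)).hasDerivAt_comp_add_smul).sub_const (f v)).sub
      ((hasDerivAt_id' t).mul_const ⟪gradient f v, u - v⟫)).congr_deriv
      (by rw [inner_sub_left, one_mul])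
  have hbound : ∀ t ∈ Ico (0 : ℝ) 1,
      ‖⟪gradient f (v + t • (u - v)) - gradient f v, u - v⟫‖ ≤ M * K ^ 2 * t := by
    intro t ht
    calc ‖⟪gradient f (v + t • (u - v)) - gradient f v, u - v⟫‖
        ≤ ‖gradient f (v + t • (u - v)) - gradient f v‖ * K := norm_inner_le_norm _ _
      _ ≤ M * ‖v + t • (u - v) - v‖ * K := by
        gcongr; exact hLip _ (hseg t (Ico_subset_Icc_self ht)) _ hv
      _ = M * K ^ 2 * t := by
        rw [add_sub_cancel_left, norm_smul, Real.norm_of_nonneg ht.1]; ring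
  have hB : ∀ t : ℝ, HasDerivAt (fun s ↦ M / 2 * K ^ 2 * s ^ 2) (M * K ^ 2 * t) t := fun t ↦
    ((hasDerivAt_pow 2 t).const_mul (M / 2 * K ^ 2)).congr_deriv (by ring)
  simpa using image_norm_le_of_norm_deriv_right_le_deriv_boundary
    (fun t ht ↦ (hφ t ht).continuousAt.continuousWithinAt)
    (fun t ht ↦ (hφ t (Ico_subset_Icc_self ht)).hasDerivWithinAt) (by simp) hB hbound
    (right_mem_Icc.2 zero_le_one)

theorem sub_le_of_gradient_step {S : Set E} (hS : Convex ℝ S)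
    (hf : ∀ u ∈ S, DifferentiableAt ℝ f u) {M : ℝ}
    (hLip : ∀ u ∈ S, ∀ v ∈ S, ‖gradient f u - gradient f v‖ ≤ M * ‖u - v‖)
    {α : ℝ} (hα : α ≠ 0) {x p q : E} (hx : x ∈ S) (hp : p ∈ S) (hq : q ∈ S)
    (hstep : p - α • gradient f q ∈ S) :
    f (p - α • gradient f q) - f x ≤
      -(1 / (2 * α) - M / 2) * ‖p - (p - α • gradient f q)‖ ^ 2
        + (1 / (2 * α) + M / 2) * ‖p - x‖ ^ 2
        - 1 / (2 * α) * ‖(p - α • gradient f q) - x‖ ^ 2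
        + M * ‖p - q‖ * ‖(p - α • gradient f q) - x‖ := by
  set x' := p - α • gradient f q
  have upper := (abs_le.mp (abs_sub_sub_inner_gradient_le hS hf hLip hstep hp)).2
  have lower := (abs_le.mp (abs_sub_sub_inner_gradient_le hS hf hLip hx hp)).1
  have hsplit : ⟪gradient f p, x' - p⟫ - ⟪gradient f p, x - p⟫
      = ⟪gradient f q, x' - x⟫ + ⟪gradient f p - gradient f q, x' - x⟫ := by
    rw [← inner_sub_right, sub_sub_sub_cancel_right, ← inner_add_left, add_sub_cancel]
  have hcross : ⟪gradient f p - gradient f q, x' - x⟫ ≤ M * ‖p - q‖ * ‖x' - x‖ :=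
    (real_inner_le_norm _ _).trans (by gcongr; exact hLip p hp q hq)
  have hthree : ⟪gradient f q, x' - x⟫
      = 1 / (2 * α) * (‖p - x‖ ^ 2 - ‖p - x'‖ ^ 2 - ‖x' - x‖ ^ 2) := by
    rw [← two_mul_inner_sub_sub_eq, show p - x' = α • gradient f q by simp [x'],
      real_inner_smul_left]
    field_simp
  rw [norm_sub_rev x' p] at upper
  rw [norm_sub_rev x p] at lower
  linarith

end GradientStep

/-- One-step descent inequality for the momentum method. -/
theorem momentum_descent_inequality {n : ℕ}
    (f : EuclideanSpace ℝ (Fin n) → ℝ) (hf : ContDiff ℝ 1 f)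
    (S : Set (EuclideanSpace ℝ (Fin n))) (hS : Convex ℝ S)
    (M α β γ : ℝ) (hM : 0 < M) (hα : 0 < α)
    (hLip : ∀ u ∈ S, ∀ v ∈ S, ‖gradient f u - gradient f v‖ ≤ M * ‖u - v‖)
    (x y' : EuclideanSpace ℝ (Fin n))
    (hx : x ∈ S)
    (hyβ : x + β • (x - y') ∈ S)
    (hyγ : x + γ • (x - y') ∈ S)
    (hxplus : x + β • (x - y') - α • gradient f (x + γ • (x - y')) ∈ S) :
    f (x + β • (x - y') - α • gradient f (x + γ • (x - y'))) - f x ≤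
      -(1 / (2 * α) - M / 2) *
          ‖(x + β • (x - y')) - (x + β • (x - y') - α • gradient f (x + γ • (x - y')))‖ ^ 2
        - (1 / (2 * α) - |β - γ| * M / 2) *
          ‖(x + β • (x - y') - α • gradient f (x + γ • (x - y'))) - x‖ ^ 2
        + ((1 / (2 * α) + M / 2) * β ^ 2 + |β - γ| * M / 2) * ‖x - y'‖ ^ 2 := by
  have hstep := sub_le_of_gradient_step hS (fun u _ ↦ hf.differentiable one_ne_zero u) hLip
    hα.ne' hx hyβ hyγ hxplus
  set d := x - y'
  set x' := x + β • d - α • gradient f (x + γ • d)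
  have hβ : ‖x + β • d - x‖ ^ 2 = β ^ 2 * ‖d‖ ^ 2 := by
    rw [add_sub_cancel_left, norm_smul, Real.norm_eq_abs, mul_pow, sq_abs]
  have hβγ : ‖x + β • d - (x + γ • d)‖ = |β - γ| * ‖d‖ := by
    rw [add_sub_add_left_eq_sub, ← sub_smul, norm_smul, Real.norm_eq_abs]
  have hamgm : M * (|β - γ| * ‖d‖) * ‖x' - x‖ ≤ |β - γ| * M / 2 * (‖d‖ ^ 2 + ‖x' - x‖ ^ 2) := by
    nlinarith [mul_nonneg hM.le (abs_nonneg (β - γ)), two_mul_le_add_sq ‖d‖ ‖x' - x‖]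
  rw [hβ, hβγ] at hstep
  linarith
end

section
/- Let f : ℝⁿ → ℝ be C¹ with M-Lipschitz gradient on a suitable convex set containing the iterates, α, λ > 0, β, γ ∈ ℝ, and H_λ(x,y) := f(x) + λ‖x−y‖². For momentum iterates and z_k := (x_k, x_{k−1}) ∈ ℝ²ⁿ, one has ‖∇H_λ(z_k)‖ ≤ √2·max{1/α, |β|/α + M|γ| + 4λ}·‖z_{k+1} − z_k‖. -/
set_option maxHeartbeats 1000000


/-- Bound on the gradient of the Lyapunov function `H_λ(x,y) = f(x) + λ‖x-y‖²` at
`z_k = (x_k, x_{k-1})`, in the Euclidean product norm on `ℝ²ⁿ`: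
`∇H_λ(x,y) = (∇f(x) + 2λ(x-y), 2λ(y-x))`. -/
theorem momentum_lyapunov_grad_bound {n : ℕ}
    (f : EuclideanSpace ℝ (Fin n) → ℝ) (hf : ContDiff ℝ 1 f)
    (S : Set (EuclideanSpace ℝ (Fin n))) (hS : Convex ℝ S)
    (M α β γ lam : ℝ) (hM : 0 < M) (hα : 0 < α) (hlam : 0 < lam)
    (hLip : ∀ u ∈ S, ∀ v ∈ S, ‖gradient f u - gradient f v‖ ≤ M * ‖u - v‖)
    (xkm1 xk xkp1 : EuclideanSpace ℝ (Fin n))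
    (hmem1 : xkm1 ∈ S) (hmem2 : xk ∈ S) (hmem3 : xkp1 ∈ S)
    (hmemγ : xk + γ • (xk - xkm1) ∈ S)
    (hupdate : xkp1 = xk + β • (xk - xkm1) - α • gradient f (xk + γ • (xk - xkm1))) :
    Real.sqrt (‖gradient f xk + (2 * lam) • (xk - xkm1)‖ ^ 2
        + ‖(2 * lam) • (xkm1 - xk)‖ ^ 2) ≤
      Real.sqrt 2 * max (1 / α) (|β| / α + M * |γ| + 4 * lam) *
        Real.sqrt (‖xkp1 - xk‖ ^ 2 + ‖xk - xkm1‖ ^ 2) := by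
  set d := xk - xkm1 with hd
  set g := gradient f xk with hg
  set gγ := gradient f (xk + γ • d) with hgγ
  set A := ‖xkp1 - xk‖ with hA
  set B := ‖d‖ with hB
  set C := max (1 / α) (|β| / α + M * |γ| + 4 * lam) with hC
  set F := ‖g + (2 * lam) • d‖ with hF
  have hAnn : 0 ≤ A := norm_nonneg _
  have hBnn : 0 ≤ B := norm_nonneg _
  have hFnn : 0 ≤ F := norm_nonneg _
  have hCpos : 0 < C := lt_of_lt_of_le (by positivity) (le_max_left _ _)
  -- second component norm
  have hG : ‖(2 * lam) • (xkm1 - xk)‖ = 2 * lam * B := by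
    rw [norm_smul, Real.norm_eq_abs, abs_of_pos (by linarith), norm_sub_rev]
  -- Lipschitz bound
  have hgg : ‖g - gγ‖ ≤ M * (|γ| * B) := by
    calc ‖g - gγ‖ ≤ M * ‖xk - (xk + γ • d)‖ := hLip xk hmem2 _ hmemγ
      _ = M * (|γ| * B) := by
          rw [norm_sub_rev, add_sub_cancel_left, norm_smul, Real.norm_eq_abs]
  -- rewrite using the update
  have hup : (1 / α) • (xkp1 - xk) = (β / α) • d - gγ := by
    have h1 : xkp1 - xk = β • d - α • gγ := by rw [hupdate]; abel
    rw [h1, smul_sub, smul_smul, smul_smul, one_div_mul_cancel hα.ne', one_smul,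
      show 1 / α * β = β / α by ring]
  have key : g + (2 * lam) • d
      = (g - gγ) + ((β / α) • d - (1 / α) • (xkp1 - xk)) + (2 * lam) • d := by
    rw [hup]; abel
  -- bound F
  have hFb : F ≤ M * (|γ| * B) + (|β| / α * B + 1 / α * A) + 2 * lam * B := by
    rw [hF, key]
    have t1 := norm_add_le ((g - gγ) + ((β / α) • d - (1 / α) • (xkp1 - xk)))
      ((2 * lam) • d)
    have t2 := norm_add_le (g - gγ) ((β / α) • d - (1 / α) • (xkp1 - xk))
    have t3 := norm_sub_le ((β / α) • d) ((1 / α) • (xkp1 - xk))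
    have e1 : ‖(β / α) • d‖ = |β| / α * B := by
      rw [norm_smul, Real.norm_eq_abs, abs_div, abs_of_pos hα]
    have e2 : ‖(1 / α) • (xkp1 - xk)‖ = 1 / α * A := by
      rw [norm_smul, Real.norm_eq_abs, abs_of_pos (by positivity)]
    have e3 : ‖(2 * lam) • d‖ = 2 * lam * B := by
      rw [norm_smul, Real.norm_eq_abs, abs_of_pos (by linarith)]
    rw [e1, e2] at t3
    rw [e3] at t1
    linarith
  rw [hG]
  clear_value A B C F
  -- combine: F + 2λB ≤ C(A+B)
  have hc1 : 1 / α ≤ C := by rw [hC]; exact le_max_left _ _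
  have hc2 : |β| / α + M * |γ| + 4 * lam ≤ C := by rw [hC]; exact le_max_right _ _
  have h1 : F + 2 * lam * B ≤ C * (A + B) := by
    have p1 : 0 ≤ (C - 1 / α) * A := mul_nonneg (by linarith) hAnn
    have p2 : 0 ≤ (C - (|β| / α + M * |γ| + 4 * lam)) * B := mul_nonneg (by linarith) hBnn
    nlinarith
  have h2 : F ^ 2 + (2 * lam * B) ^ 2 ≤ (Real.sqrt 2 * C * Real.sqrt (A ^ 2 + B ^ 2)) ^ 2 := by
    have hs1 : Real.sqrt 2 ^ 2 = 2 := Real.sq_sqrt (by norm_num)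
    have hs2 : Real.sqrt (A ^ 2 + B ^ 2) ^ 2 = A ^ 2 + B ^ 2 := Real.sq_sqrt (by positivity)
    have hGnn : 0 ≤ 2 * lam * B := by positivity
    have hsum : 0 ≤ C * (A + B) + (F + 2 * lam * B) := by positivity
    have expand : (Real.sqrt 2 * C * Real.sqrt (A ^ 2 + B ^ 2)) ^ 2
        = 2 * C ^ 2 * (A ^ 2 + B ^ 2) := by
      rw [mul_pow, mul_pow, hs1, hs2]
    rw [expand]
    have step1 : F ^ 2 + (2 * lam * B) ^ 2 ≤ (F + 2 * lam * B) ^ 2 := by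
      nlinarith [mul_nonneg hFnn hGnn]
    have step2 : (F + 2 * lam * B) ^ 2 ≤ (C * (A + B)) ^ 2 :=
      pow_le_pow_left₀ (by positivity) h1 2
    have step3 : (C * (A + B)) ^ 2 ≤ 2 * C ^ 2 * (A ^ 2 + B ^ 2) := by
      nlinarith [mul_nonneg (sq_nonneg C) (sq_nonneg (A - B))]
    linarith
  calc Real.sqrt (F ^ 2 + (2 * lam * B) ^ 2)
      ≤ Real.sqrt ((Real.sqrt 2 * C * Real.sqrt (A ^ 2 + B ^ 2)) ^ 2) :=
        Real.sqrt_le_sqrt h2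
    _ = Real.sqrt 2 * C * Real.sqrt (A ^ 2 + B ^ 2) := Real.sqrt_sq (by positivity)
end

section
/- Let A ∈ ℝ^{n×n} be symmetric with eigendecomposition A = PDPᵀ, D = diag(d₁,…,d_n), and suppose d_j < 0 for some j. Fix α > 0, β, γ ∈ ℝ. Then the 2n×2n matrix F' = [[(1+β)I − α(1+γ)A, −βI + αγA], [I, 0]] has characteristic polynomial det(λI₂ₙ − F') = Π_{i=1}^n (λ² + (α(1+γ)d_i − (1+β))λ + β − αγ d_i), and F' has a real eigenvalue strictly greater than 1. -/
private lemma quad_root_gt_one (b c : ℝ) (hneg : 1 + b + c < 0) :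
    ∃ x : ℝ, 1 < x ∧ x ^ 2 + b * x + c = 0 := by
  set φ : ℝ → ℝ := fun x => x ^ 2 + b * x + c with hφ
  have hφ1 : φ 1 < 0 := by simp only [hφ]; nlinarith
  set T : ℝ := max 2 (|b| + |c| + 2) with hT
  have hT2 : (2 : ℝ) ≤ T := le_max_left _ _
  have hTbc : |b| + |c| + 2 ≤ T := le_max_right _ _
  have hφT : 0 ≤ φ T := by
    have hb0 : (0:ℝ) ≤ |b| := abs_nonneg b
    have hc0 : (0:ℝ) ≤ |c| := abs_nonneg c
    have hbb : -|b| ≤ b := neg_abs_le b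
    have p1 : 0 ≤ T * (T - |b| - |c| - 2) :=
      mul_nonneg (by linarith) (by linarith)
    have p2 : 0 ≤ (|b| + b) * T := mul_nonneg (by linarith) (by linarith)
    have p3 : 0 ≤ (T - 2) * |c| := mul_nonneg (by linarith) (abs_nonneg c)
    have := neg_abs_le c
    simp only [hφ]
    nlinarith
  have hIVT := intermediate_value_Icc (by linarith : (1:ℝ) ≤ T)
    (Continuous.continuousOn (by continuity : Continuous φ))
  obtain ⟨x, hx, hφx⟩ := hIVT ⟨le_of_lt hφ1, hφT⟩
  have hx1 : 1 < x := by
    rcases lt_or_eq_of_le hx.1 with h | h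
    · exact h
    · exfalso; rw [← h] at hφx; rw [hφx] at hφ1; exact lt_irrefl 0 hφ1
  exact ⟨x, hx1, hφx⟩


open Matrix in
/-- The characteristic polynomial of the Jacobian of the momentum map at a
critical point, and existence of a real eigenvalue strictly greater than 1
when the symmetric matrix `A` has a negative eigenvalue. -/
theorem momentum_jacobian_eigenvalue {n : ℕ}
    (A : Matrix (Fin n) (Fin n) ℝ) (hA : A.IsSymm)
    (P : Matrix (Fin n) (Fin n) ℝ) (hP : P ∈ Matrix.orthogonalGroup (Fin n) ℝ)
    (d : Fin n → ℝ) (hdecomp : A = P * Matrix.diagonal d * Pᵀ)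
    (j : Fin n) (hdj : d j < 0)
    (α β γ : ℝ) (hα : 0 < α)
    (F' : Matrix (Fin n ⊕ Fin n) (Fin n ⊕ Fin n) ℝ)
    (hF' : F' = Matrix.fromBlocks
      ((1 + β) • (1 : Matrix (Fin n) (Fin n) ℝ) - (α * (1 + γ)) • A)
      ((-β) • (1 : Matrix (Fin n) (Fin n) ℝ) + (α * γ) • A)
      (1 : Matrix (Fin n) (Fin n) ℝ) 0) :
    (∀ lam : ℝ,
      (lam • (1 : Matrix (Fin n ⊕ Fin n) (Fin n ⊕ Fin n) ℝ) - F').det =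
        ∏ i, (lam ^ 2 + (α * (1 + γ) * d i - (1 + β)) * lam + β - α * γ * d i)) ∧
    ∃ lam : ℝ, 1 < lam ∧
      (lam • (1 : Matrix (Fin n ⊕ Fin n) (Fin n ⊕ Fin n) ℝ) - F').det = 0 := by
  have hPPt : P * Pᵀ = 1 := by
    have := (Matrix.mem_orthogonalGroup_iff (Fin n) ℝ).mp hP
    simpa [Matrix.star_eq_conjTranspose,
      Matrix.conjTranspose_eq_transpose_of_trivial] using this
  -- the n×n determinant computation
  have hM : ∀ c e : ℝ,
      (c • (1 : Matrix (Fin n) (Fin n) ℝ) + e • A).det = ∏ i, (c + e * d i) := by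
    intro c e
    have h1 : c • (1 : Matrix (Fin n) (Fin n) ℝ) + e • A
        = P * Matrix.diagonal (fun i => c + e * d i) * Pᵀ := by
      rw [hdecomp]
      have : Matrix.diagonal (fun i => c + e * d i)
          = c • (1 : Matrix (Fin n) (Fin n) ℝ) + e • Matrix.diagonal d := by
        rw [Matrix.smul_one_eq_diagonal]
        ext i k
        by_cases h : i = k <;> simp [h, Matrix.diagonal_apply, Matrix.one_apply]
      rw [this]
      rw [Matrix.mul_add, Matrix.add_mul, Matrix.mul_smul, Matrix.smul_mul,
        Matrix.mul_one, hPPt, Matrix.mul_smul, Matrix.smul_mul]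
    rw [h1, Matrix.det_mul, Matrix.det_mul, Matrix.det_diagonal]
    have : P.det * Pᵀ.det = 1 := by rw [← Matrix.det_mul, hPPt, Matrix.det_one]
    linear_combination (∏ i : Fin n, (c + e * d i)) * this
  have key_ne : ∀ lam : ℝ, lam ≠ 0 →
      (lam • (1 : Matrix (Fin n ⊕ Fin n) (Fin n ⊕ Fin n) ℝ) - F').det =
        ∏ i, (lam ^ 2 + (α * (1 + γ) * d i - (1 + β)) * lam + β - α * γ * d i) := by
    intro lam hlam
    have hblock : lam • (1 : Matrix (Fin n ⊕ Fin n) (Fin n ⊕ Fin n) ℝ) - F' =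
        Matrix.fromBlocks
          (lam • 1 - ((1 + β) • (1 : Matrix (Fin n) (Fin n) ℝ) - (α * (1 + γ)) • A))
          (-((-β) • (1 : Matrix (Fin n) (Fin n) ℝ) + (α * γ) • A))
          (-1) (lam • 1) := by
      rw [hF']
      ext (i|i) (k|k) <;>
        simp [Matrix.fromBlocks, Matrix.one_apply, Matrix.sub_apply, Matrix.smul_apply]
    letI : Invertible (lam • (1 : Matrix (Fin n) (Fin n) ℝ)) :=
      ⟨lam⁻¹ • 1, by rw [smul_mul_smul_comm, inv_mul_cancel₀ hlam, one_smul, one_mul],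
        by rw [smul_mul_smul_comm, mul_inv_cancel₀ hlam, one_smul, one_mul]⟩
    have hinv : ⅟(lam • (1 : Matrix (Fin n) (Fin n) ℝ)) = lam⁻¹ • 1 := rfl
    rw [hblock, Matrix.det_fromBlocks₂₂, hinv]
    have h2 : (lam • 1 - ((1 + β) • (1 : Matrix (Fin n) (Fin n) ℝ) - (α * (1 + γ)) • A))
        - (-((-β) • (1 : Matrix (Fin n) (Fin n) ℝ) + (α * γ) • A)) * (lam⁻¹ • 1) * (-1)
        = lam • 1 - ((1 + β) • 1 - (α * (1 + γ)) • A)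
            - lam⁻¹ • ((-β) • (1 : Matrix (Fin n) (Fin n) ℝ) + (α * γ) • A) := by
      rw [Matrix.mul_smul, Matrix.mul_one, Matrix.mul_neg, Matrix.mul_one]
      simp
    rw [h2]
    have hdet1 : (lam • (1 : Matrix (Fin n) (Fin n) ℝ)).det = lam ^ n := by
      simp [Matrix.det_smul]
    have h3 : (lam • (lam • 1 - ((1 + β) • (1 : Matrix (Fin n) (Fin n) ℝ)
          - (α * (1 + γ)) • A)
          - lam⁻¹ • ((-β) • (1 : Matrix (Fin n) (Fin n) ℝ) + (α * γ) • A))).det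
        = lam ^ n * (lam • 1 - ((1 + β) • (1 : Matrix (Fin n) (Fin n) ℝ)
          - (α * (1 + γ)) • A)
          - lam⁻¹ • ((-β) • (1 : Matrix (Fin n) (Fin n) ℝ) + (α * γ) • A)).det := by
      simp [Matrix.det_smul]
    have h4 : lam • (lam • 1 - ((1 + β) • (1 : Matrix (Fin n) (Fin n) ℝ)
          - (α * (1 + γ)) • A)
          - lam⁻¹ • ((-β) • (1 : Matrix (Fin n) (Fin n) ℝ) + (α * γ) • A))
        = (lam ^ 2 - (1 + β) * lam + β) • (1 : Matrix (Fin n) (Fin n) ℝ)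
          + (α * (1 + γ) * lam - α * γ) • A := by
      ext i k
      simp only [Matrix.smul_apply, Matrix.sub_apply, Matrix.add_apply, Matrix.one_apply,
        smul_eq_mul]
      split_ifs <;> field_simp <;> ring
    rw [hdet1, ← h3, h4, hM]
    exact Finset.prod_congr rfl fun i _ => by ring
  have key : ∀ lam : ℝ,
      (lam • (1 : Matrix (Fin n ⊕ Fin n) (Fin n ⊕ Fin n) ℝ) - F').det =
        ∏ i, (lam ^ 2 + (α * (1 + γ) * d i - (1 + β)) * lam + β - α * γ * d i) := by
    have hf : Continuous fun lam : ℝ =>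
        (lam • (1 : Matrix (Fin n ⊕ Fin n) (Fin n ⊕ Fin n) ℝ) - F').det := by
      exact Continuous.matrix_det ((continuous_id.smul continuous_const).sub continuous_const)
    have hg : Continuous fun lam : ℝ =>
        ∏ i, (lam ^ 2 + (α * (1 + γ) * d i - (1 + β)) * lam + β - α * γ * d i) := by
      continuity
    have heq := Continuous.ext_on (dense_compl_singleton (0 : ℝ)) hf hg
      (fun lam hlam => key_ne lam (by simpa using hlam))
    exact fun lam => congrFun heq lam
  refine ⟨key, ?_⟩
  obtain ⟨x, hx1, hφx⟩ := quad_root_gt_one (α * (1 + γ) * d j - (1 + β)) (β - α * γ * d j)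
    (by nlinarith)
  refine ⟨x, hx1, ?_⟩
  rw [key x]
  apply Finset.prod_eq_zero (Finset.mem_univ j)
  linarith [hφx]
end

section
/- Let f : ℝⁿ → ℝ be C² and suppose ∇f is M-Lipschitz on a convex set containing all points x + γ(x − y) for x, y in an open bounded set X̃. Let β ∈ (−1,1)\{0}, γ ∈ ℝ, and α ∈ (0, |β|/(1 + |γ|M)]. Then the momentum map F(x,y) = (x + β(x−y) − α∇f(x + γ(x−y)), x) has invertible Jacobian at every point of X̃ × X̃, with det F'(x,y) = det(βI − αγ∇²f(x + γ(x−y))) ≠ 0. -/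
/-!
Writing `z = x + γ(x - y)` and `H = ∇²f(z)`, the Jacobian of the momentum map is the block
matrix `[[(1 + β)I - α(1 + γ)H, -(βI - αγH)], [I, 0]]`, whose determinant is `det(βI - αγH)`.
The step-size bound gives `‖αγH‖ ≤ α|γ|M < |β|`, so `β` lies outside the spectrum of `αγH`
and `βI - αγH` is invertible.
-/

theorem Matrix.det_fromBlocks_one_zero {R n : Type*} [CommRing R] [Fintype n] [DecidableEq n]
    (A B : Matrix n n R) : (fromBlocks A B 1 0).det = (-B).det := by
  -- `[[A, B], [1, 0]] = [[-B, A], [0, 1]] · [[0, -1], [1, 0]]`, the last factor a product of shears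
  have : fromBlocks A B (1 : Matrix n n R) 0 = fromBlocks (-B) A 0 1 *
      (fromBlocks 1 (-1) 0 1 * fromBlocks 1 0 1 1 * fromBlocks 1 (-1) 0 1) := by
    simp [fromBlocks_multiply]
  rw [this]
  simp

theorem LinearMap.det_coprod_prod_fst {R M : Type*} [CommRing R] [AddCommGroup M] [Module R M]
    [Module.Free R M] [Module.Finite R M] (A B : M →ₗ[R] M) :
    LinearMap.det ((A.coprod B).prod (LinearMap.fst R M M)) = LinearMap.det (-B) := by
  classical
  let e := Module.Free.chooseBasis R M
  rw [← LinearMap.det_toMatrix (e.prod e), ← LinearMap.det_toMatrix e, map_neg,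
    ← Matrix.det_fromBlocks_one_zero (toMatrix e e A)]
  congr 1
  ext (i | i) (j | j) <;>
    simp [LinearMap.toMatrix_apply, Module.Basis.prod_apply, Matrix.one_apply,
      Finsupp.single_apply, eq_comm]

theorem ContinuousLinearMap.det_smul_id_sub_ne_zero {𝕜 E : Type*} [NontriviallyNormedField 𝕜]
    [CompleteSpace 𝕜] [NormedAddCommGroup E] [NormedSpace 𝕜 E] [FiniteDimensional 𝕜 E]
    {T : E →L[𝕜] E} {k : 𝕜} (h : ‖T‖ < ‖k‖) :
    LinearMap.det (k • ContinuousLinearMap.id 𝕜 E - T).toLinearMap ≠ 0 := by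
  have := FiniteDimensional.complete 𝕜 E
  have hk : k ∈ resolventSet 𝕜 T := spectrum.mem_resolventSet_of_norm_lt_mul <|
    (mul_le_of_le_one_right (norm_nonneg T) norm_id_le).trans_lt h
  rw [spectrum.mem_resolventSet_iff, Algebra.algebraMap_eq_smul_one] at hk
  exact (LinearMap.isUnit_det _ (hk.map (toLinearMapRingHom : (E →L[𝕜] E) →+* _))).ne_zero

section MomentumMap

variable {𝕜 E : Type*} [NontriviallyNormedField 𝕜] [NormedAddCommGroup E] [NormedSpace 𝕜 E]

def momentumMap (g : E → E) (α β γ : 𝕜) (p : E × E) : E × E :=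
  (p.1 + β • (p.1 - p.2) - α • g (p.1 + γ • (p.1 - p.2)), p.1)

open ContinuousLinearMap in
theorem hasFDerivAt_momentumMap {g : E → E} {g' : E →L[𝕜] E} {α β γ : 𝕜} {x y : E}
    (hg : HasFDerivAt g g' (x + γ • (x - y))) :
    HasFDerivAt (momentumMap g α β γ)
      ((fst 𝕜 E E + β • (fst 𝕜 E E - snd 𝕜 E E) -
        α • g'.comp (fst 𝕜 E E + γ • (fst 𝕜 E E - snd 𝕜 E E))).prod (fst 𝕜 E E)) (x, y) := by
  have hdiff : HasFDerivAt (fun p : E × E => p.1 - p.2) (fst 𝕜 E E - snd 𝕜 E E) (x, y) :=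
    hasFDerivAt_fst.sub hasFDerivAt_snd
  exact ((hasFDerivAt_fst.add (hdiff.const_smul β)).sub
    ((hg.comp (x, y) (hasFDerivAt_fst.add (hdiff.const_smul γ))).const_smul α)).prodMk
    hasFDerivAt_fst

theorem det_fderiv_momentumMap [FiniteDimensional 𝕜 E] {g : E → E} {g' : E →L[𝕜] E}
    {α β γ : 𝕜} {x y : E} (hg : HasFDerivAt g g' (x + γ • (x - y))) :
    LinearMap.det (fderiv 𝕜 (momentumMap g α β γ) (x, y)).toLinearMap =
      LinearMap.det (β • ContinuousLinearMap.id 𝕜 E - (α * γ) • g').toLinearMap := by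
  rw [(hasFDerivAt_momentumMap hg).fderiv, ← neg_neg (β • _ - _ : E →L[𝕜] E),
    ContinuousLinearMap.toLinearMap_neg,
    ← LinearMap.det_coprod_prod_fst
      (((1 + β) • ContinuousLinearMap.id 𝕜 E - (α * (1 + γ)) • g').toLinearMap)]
  congr 1
  refine LinearMap.ext fun p => Prod.ext ?_ rfl
  simp only [ContinuousLinearMap.comp_add, ContinuousLinearMap.comp_smulₛₗ, RingHom.id_apply,
    ContinuousLinearMap.comp_sub, smul_add, ContinuousLinearMap.coe_prod,
    ContinuousLinearMap.toLinearMap_sub, ContinuousLinearMap.toLinearMap_add,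
    ContinuousLinearMap.coe_fst, ContinuousLinearMap.toLinearMap_smul,
    ContinuousLinearMap.coe_snd, ContinuousLinearMap.toLinearMap_comp, LinearMap.prod_apply,
    LinearMap.coe_fst, Function.prod_apply, LinearMap.sub_apply, LinearMap.add_apply,
    LinearMap.fst_apply, LinearMap.smul_apply, LinearMap.snd_apply, LinearMap.coe_comp,
    ContinuousLinearMap.coe_coe, Function.comp_apply, LinearMap.coe_snd,
    ContinuousLinearMap.coe_id, neg_sub, LinearMap.coprod_apply, LinearMap.id_coe, id_eq]
  module

end MomentumMap

theorem mul_lt_of_le_div_one_add {K : Type*} [Field K] [LinearOrder K] [IsStrictOrderedRing K]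
    {a b c : K} (ha : 0 < a) (hb : 0 ≤ b) (h : a ≤ b / (1 + c)) : a * c < b := by
  have hc : 0 < 1 + c := by
    by_contra! hc
    exact (ha.trans_le h).not_ge (div_nonpos_of_nonneg_of_nonpos hb hc)
  have := (le_div_iff₀ hc).1 h
  linarith

theorem ContDiff.differentiable_gradient {F : Type*} [NormedAddCommGroup F]
    [InnerProductSpace ℝ F] [CompleteSpace F] {f : F → ℝ} (hf : ContDiff ℝ 2 f) :
    Differentiable ℝ (gradient f) :=
  ((InnerProductSpace.toDual ℝ F).symm.contDiff.comp (hf.fderiv_right one_add_one_eq_two.le)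
    ).differentiable one_ne_zero

theorem momentum_map_jacobian_invertible_general {n : ℕ}
    (f : EuclideanSpace ℝ (Fin n) → ℝ) (hf : ContDiff ℝ 2 f)
    (Xt : Set (EuclideanSpace ℝ (Fin n)))
    (M α β γ : ℝ)
    (hα0 : 0 < α) (hα1 : α ≤ |β| / (1 + |γ| * M))
    (hHess : ∀ x ∈ Xt, ∀ y ∈ Xt,
      ‖fderiv ℝ (gradient f) (x + γ • (x - y))‖ ≤ M)
    (F : EuclideanSpace ℝ (Fin n) × EuclideanSpace ℝ (Fin n) →
         EuclideanSpace ℝ (Fin n) × EuclideanSpace ℝ (Fin n))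
    (hF : ∀ p, F p = (p.1 + β • (p.1 - p.2) - α • gradient f (p.1 + γ • (p.1 - p.2)), p.1)) :
    ∀ x ∈ Xt, ∀ y ∈ Xt,
      LinearMap.det ((fderiv ℝ F (x, y)).toLinearMap) =
        LinearMap.det ((β • ContinuousLinearMap.id ℝ (EuclideanSpace ℝ (Fin n))
          - (α * γ) • fderiv ℝ (gradient f) (x + γ • (x - y))).toLinearMap) ∧
      LinearMap.det ((fderiv ℝ F (x, y)).toLinearMap) ≠ 0 := by
  intro x hx y hy
  have hFeq : F = momentumMap (gradient f) α β γ := funext hF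
  rw [hFeq, det_fderiv_momentumMap (hf.differentiable_gradient _).hasFDerivAt]
  refine ⟨rfl, ContinuousLinearMap.det_smul_id_sub_ne_zero ?_⟩
  calc ‖(α * γ) • fderiv ℝ (gradient f) (x + γ • (x - y))‖
      = α * |γ| * ‖fderiv ℝ (gradient f) (x + γ • (x - y))‖ := by
        rw [norm_smul, norm_mul, Real.norm_eq_abs, Real.norm_eq_abs, abs_of_pos hα0]
    _ ≤ α * |γ| * M := by gcongr; exact hHess x hx y hy
    _ < |β| := by rw [mul_assoc]; exact mul_lt_of_le_div_one_add hα0 (abs_nonneg β) hα1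
    _ = ‖β‖ := (Real.norm_eq_abs β).symm

/-- The lifted momentum map `F(x,y) = (x + β(x−y) − α∇f(x+γ(x−y)), x)` has an
invertible Jacobian on `X̃ × X̃`, with determinant
`det F'(x,y) = det(βI − αγ∇²f(x+γ(x−y))) ≠ 0`. -/
theorem momentum_map_jacobian_invertible {n : ℕ}
    (f : EuclideanSpace ℝ (Fin n) → ℝ) (hf : ContDiff ℝ 2 f)
    (Xt : Set (EuclideanSpace ℝ (Fin n))) (hXo : IsOpen Xt)
    (hXb : Bornology.IsBounded Xt)
    (M α β γ : ℝ) (hM : 0 ≤ M)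
    (hβ : β ∈ Set.Ioo (-1 : ℝ) 1) (hβ0 : β ≠ 0)
    (hα0 : 0 < α) (hα1 : α ≤ |β| / (1 + |γ| * M))
    (hHess : ∀ x ∈ Xt, ∀ y ∈ Xt,
      ‖fderiv ℝ (gradient f) (x + γ • (x - y))‖ ≤ M)
    (F : EuclideanSpace ℝ (Fin n) × EuclideanSpace ℝ (Fin n) →
         EuclideanSpace ℝ (Fin n) × EuclideanSpace ℝ (Fin n))
    (hF : ∀ p, F p = (p.1 + β • (p.1 - p.2) - α • gradient f (p.1 + γ • (p.1 - p.2)), p.1)) :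
    ∀ x ∈ Xt, ∀ y ∈ Xt,
      LinearMap.det ((fderiv ℝ F (x, y)).toLinearMap) =
        LinearMap.det ((β • ContinuousLinearMap.id ℝ (EuclideanSpace ℝ (Fin n))
          - (α * γ) • fderiv ℝ (gradient f) (x + γ • (x - y))).toLinearMap) ∧
      LinearMap.det ((fderiv ℝ F (x, y)).toLinearMap) ≠ 0 :=
  momentum_map_jacobian_invertible_general f hf Xt M α β γ hα0 hα1 hHess F hF
end
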